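/- arXiv:1401.4840 — 2 statements merged into one kernel-verified Lean document; each statement's English description precedes it below -/
import Mathlib

section
/- For every well-formed deterministic three-counter machine M with m states, with p the product of the first m+3 primes, there exist functions Q, R : Fin p → ℕ with Q i ≥ 1 and R i ≥ 1 for all i, satisfying R (e(c) mod p) · e(step c) = Q (e(c) mod p) · e(c) for every configuration c, and such that the least subset 𝒢 of ℕ which contains 2 and is closed under the rule 'if n ∈ 𝒢 and z ∈ ℕ satisfies R (n mod p) · z = Q (n mod p) · n, then z ∈ 𝒢' equals the set { e(run n) : n ∈ ℕ }. In particular, M halts if and only if 𝒢 is finite. -/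
/-- A counter move: increment, decrement, or keep unchanged. -/
inductive Move : Type
  | inc : Move
  | dec : Move
  | keep : Move

/-- Applying a move to a counter value. -/
def Move.apply : Move → ℕ → ℕ
  | Move.inc, n => n + 1
  | Move.dec, n => n - 1
  | Move.keep, n => n

/-- A deterministic three-counter machine with `m` states: a partial transition
function taking the current state and the zero-flags of the first two counters,
and returning (if defined) the new state and the moves for the first two counters
(the third counter is always incremented). -/
structure CM3 (m : ℕ) where
  δ : Fin m × Bool × Bool → Option (Fin m × Move × Move)

/-- One step of the machine on a configuration `(q, c₁, c₂, c₃)`; a halting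
configuration is mapped to itself. -/
def CM3.step {m : ℕ} (M : CM3 m) (c : Fin m × ℕ × ℕ × ℕ) : Fin m × ℕ × ℕ × ℕ :=
  match M.δ (c.1, decide (c.2.1 = 0), decide (c.2.2.1 = 0)) with
  | none => c
  | some (q', m₁, m₂) => (q', m₁.apply c.2.1, m₂.apply c.2.2.1, c.2.2.2 + 1)

/-- A machine is well-formed if it never prescribes decrementing a counter whose
zero-flag argument is true. -/
def CM3.WellFormed {m : ℕ} (M : CM3 m) : Prop :=
  ∀ q b₁ b₂ q' m₁ m₂, M.δ (q, b₁, b₂) = some (q', m₁, m₂) →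
    (b₁ = true → m₁ ≠ Move.dec) ∧ (b₂ = true → m₂ ≠ Move.dec)

/-- A configuration is halting if no instruction is applicable. -/
def CM3.IsHalting {m : ℕ} (M : CM3 m) (c : Fin m × ℕ × ℕ × ℕ) : Prop :=
  M.δ (c.1, decide (c.2.1 = 0), decide (c.2.2.1 = 0)) = none

/-- The run of the machine, started in state `0` with all three counters equal to `0`. -/
def CM3.run {m : ℕ} (hm : 0 < m) (M : CM3 m) : ℕ → Fin m × ℕ × ℕ × ℕ
  | 0 => (⟨0, hm⟩, 0, 0, 0)
  | n + 1 => M.step (M.run hm n)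

/-- The encoding `e(q, c₁, c₂, c₃) = p_{q+1} · p_{m+1}^{c₁} · p_{m+2}^{c₂} · p_{m+3}^{c₃}`,
where `p_1 < p_2 < …` are the primes, i.e. `p_{j+1} = Nat.nth Nat.Prime j`. -/
noncomputable def enc (m : ℕ) (c : Fin m × ℕ × ℕ × ℕ) : ℕ :=
  Nat.nth Nat.Prime (c.1 : ℕ) * (Nat.nth Nat.Prime m) ^ c.2.1 *
    (Nat.nth Nat.Prime (m + 1)) ^ c.2.2.1 * (Nat.nth Nat.Prime (m + 2)) ^ c.2.2.2

/-- The product `p = p₁ ⋯ p_{m+3}` of the first `m + 3` primes. -/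
noncomputable def primeProd (m : ℕ) : ℕ := ∏ j ∈ Finset.range (m + 3), Nat.nth Nat.Prime j

/-- The residue `n mod p`, as an element of `Fin p` for `p = primeProd m`. -/
noncomputable def encMod (m n : ℕ) : Fin (primeProd m) :=
  ⟨n % primeProd m,
    Nat.mod_lt _ (Finset.prod_pos fun j _ => (Nat.prime_nth_prime j).pos)⟩

/-- The least subset `𝒢` of `ℕ` containing `2` and closed under the rule:
if `n ∈ 𝒢` and `z` satisfies `R (n mod p) · z = Q (n mod p) · n`, then `z ∈ 𝒢`. -/
inductive GSet (m : ℕ) (Q R : Fin (primeProd m) → ℕ) : ℕ → Prop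
  | base : GSet m Q R 2
  | step {n z : ℕ} : GSet m Q R n →
      R (encMod m n) * z = Q (encMod m n) * n → GSet m Q R z

/-!
The construction is Conway's FRACTRAN simulation. Among the first `m + 3` primes, the ones dividing
`e(c)` are `p_{q+1}` and the counter primes whose counter is nonzero; divisibility by these primes
survives reduction mod `p`, so `e(c) mod p` determines the state and both zero-flags of `c`, hence
the instruction executed in `c`. Taking `Q / R` to be the fraction turning `e(c)` into `e(step c)`
(new state and increments over old state and decrements), every `n ∈ 𝒢` determines its successor
uniquely since `R ≥ 1`, so `𝒢` is the orbit of `2 = e(run 0)`. The third counter is a clock: it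
makes the orbit grow without bound unless the run reaches a halting configuration.
-/

local notation "pr" => Nat.nth Nat.Prime

section Primes

lemma nth_prime_dvd_nth_prime_iff {j k : ℕ} : pr j ∣ pr k ↔ j = k := by
  rw [Nat.prime_dvd_prime_iff_eq (Nat.prime_nth_prime j) (Nat.prime_nth_prime k)]
  exact (Nat.nth_injective Nat.infinite_setOfPred_prime).eq_iff

lemma nth_prime_dvd_nth_prime_pow_iff {j k a : ℕ} : pr j ∣ pr k ^ a ↔ j = k ∧ a ≠ 0 := by
  rcases Nat.eq_zero_or_pos a with rfl | ha
  · simp [(Nat.prime_nth_prime j).one_lt.ne']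
  · rw [(Nat.prime_nth_prime j).prime.dvd_pow_iff_dvd ha.ne', nth_prime_dvd_nth_prime_iff]
    exact ⟨fun h => ⟨h, ha.ne'⟩, And.left⟩

end Primes

section Encoding

variable {m : ℕ}

lemma enc_pos (c : Fin m × ℕ × ℕ × ℕ) : 0 < enc m c := by
  simp [enc, Nat.pos_iff_ne_zero, (Nat.prime_nth_prime _).ne_zero]

lemma lt_enc (c : Fin m × ℕ × ℕ × ℕ) : c.2.2.2 < enc m c :=
  calc c.2.2.2 < 2 ^ c.2.2.2 := Nat.lt_two_pow_self
    _ ≤ pr (m + 2) ^ c.2.2.2 := Nat.pow_le_pow_left (Nat.prime_nth_prime _).two_le _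
    _ ≤ enc m c := Nat.le_of_dvd (enc_pos c) (Dvd.intro_left _ rfl)

lemma nth_prime_dvd_enc_iff (c : Fin m × ℕ × ℕ × ℕ) (j : ℕ) :
    pr j ∣ enc m c ↔
      j = (c.1 : ℕ) ∨ (j = m ∧ c.2.1 ≠ 0) ∨ (j = m + 1 ∧ c.2.2.1 ≠ 0) ∨
        (j = m + 2 ∧ c.2.2.2 ≠ 0) := by
  have hp := Nat.prime_nth_prime j
  rw [enc, hp.dvd_mul, hp.dvd_mul, hp.dvd_mul, nth_prime_dvd_nth_prime_iff,
    nth_prime_dvd_nth_prime_pow_iff, nth_prime_dvd_nth_prime_pow_iff,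
    nth_prime_dvd_nth_prime_pow_iff]
  tauto

lemma nth_prime_dvd_mod_primeProd_iff {j : ℕ} (hj : j < m + 3) (n : ℕ) :
    pr j ∣ n % primeProd m ↔ pr j ∣ n :=
  Nat.dvd_mod_iff (Finset.dvd_prod_of_mem _ (Finset.mem_range.2 hj))

lemma enc_run_zero (hm : 0 < m) (M : CM3 m) : enc m (M.run hm 0) = 2 := by
  simp [enc, CM3.run, Nat.nth_prime_zero_eq_two]

end Encoding

section Decoding

noncomputable def decodeState (m i : ℕ) : Option (Fin m) :=
  Fin.find? fun q => decide (pr (q : ℕ) ∣ i)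

noncomputable def decodeFlag (k i : ℕ) : Bool :=
  decide ¬ pr k ∣ i

variable {m : ℕ}

/-- The instruction `(q, q', m₁, m₂)` executed in any configuration whose encoding is `≡ i`. -/
noncomputable def CM3.instrAt (M : CM3 m) (i : ℕ) : Option (Fin m × Fin m × Move × Move) :=
  (decodeState m i).bind fun q =>
    (M.δ (q, decodeFlag m i, decodeFlag (m + 1) i)).map fun t => (q, t)

lemma decodeState_enc_mod (c : Fin m × ℕ × ℕ × ℕ) :
    decodeState m (enc m c % primeProd m) = some c.1 := by
  have hdvd : ∀ q : Fin m, pr (q : ℕ) ∣ enc m c % primeProd m ↔ q = c.1 := by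
    intro q
    have hq := q.2
    rw [nth_prime_dvd_mod_primeProd_iff (by omega), nth_prime_dvd_enc_iff, Fin.ext_iff]
    omega
  rw [decodeState, ← Option.mem_def, Fin.mem_find?_iff]
  exact ⟨decide_eq_true ((hdvd c.1).2 rfl),
    fun q hq hdq => hq.ne ((hdvd q).1 (of_decide_eq_true hdq))⟩

lemma decodeFlag_enc_mod_first (c : Fin m × ℕ × ℕ × ℕ) :
    decodeFlag m (enc m c % primeProd m) = decide (c.2.1 = 0) := by
  have := c.1.2
  rw [decodeFlag, decide_eq_decide, nth_prime_dvd_mod_primeProd_iff (by omega),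
    nth_prime_dvd_enc_iff]
  omega

lemma decodeFlag_enc_mod_second (c : Fin m × ℕ × ℕ × ℕ) :
    decodeFlag (m + 1) (enc m c % primeProd m) = decide (c.2.2.1 = 0) := by
  have := c.1.2
  rw [decodeFlag, decide_eq_decide, nth_prime_dvd_mod_primeProd_iff (by omega),
    nth_prime_dvd_enc_iff]
  omega

lemma CM3.instrAt_enc_mod (M : CM3 m) (c : Fin m × ℕ × ℕ × ℕ) :
    M.instrAt (enc m c % primeProd m) =
      (M.δ (c.1, decide (c.2.1 = 0), decide (c.2.2.1 = 0))).map fun t => (c.1, t) := by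
  rw [CM3.instrAt, decodeState_enc_mod, decodeFlag_enc_mod_first, decodeFlag_enc_mod_second,
    Option.bind_some]

end Decoding

section Fractions

variable {m : ℕ}

def Move.incFactor : Move → ℕ → ℕ
  | Move.inc, p => p
  | _, _ => 1

def Move.decFactor : Move → ℕ → ℕ
  | Move.dec, p => p
  | _, _ => 1

lemma Move.incFactor_ne_zero (mv : Move) {p : ℕ} (hp : p ≠ 0) : mv.incFactor p ≠ 0 := by
  cases mv <;> simp [Move.incFactor, hp]

lemma Move.decFactor_ne_zero (mv : Move) {p : ℕ} (hp : p ≠ 0) : mv.decFactor p ≠ 0 := by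
  cases mv <;> simp [Move.decFactor, hp]

lemma Move.decFactor_mul_pow_apply (mv : Move) {n : ℕ} (hn : mv = Move.dec → n ≠ 0) (p : ℕ) :
    mv.decFactor p * p ^ mv.apply n = mv.incFactor p * p ^ n := by
  cases mv with
  | inc => simp [Move.decFactor, Move.incFactor, Move.apply, pow_succ, mul_comm]
  | keep => simp [Move.decFactor, Move.incFactor, Move.apply]
  | dec =>
    obtain ⟨k, rfl⟩ := Nat.exists_eq_succ_of_ne_zero (hn rfl)
    simp [Move.decFactor, Move.incFactor, Move.apply, pow_succ, mul_comm]

noncomputable def conwayNum (M : CM3 m) (i : ℕ) : ℕ :=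
  match M.instrAt i with
  | none => 1
  | some (_, q', m₁, m₂) =>
    pr (q' : ℕ) * pr (m + 2) * m₁.incFactor (pr m) * m₂.incFactor (pr (m + 1))

noncomputable def conwayDen (M : CM3 m) (i : ℕ) : ℕ :=
  match M.instrAt i with
  | none => 1
  | some (q, _, m₁, m₂) => pr (q : ℕ) * m₁.decFactor (pr m) * m₂.decFactor (pr (m + 1))

lemma conwayNum_pos (M : CM3 m) (i : ℕ) : 0 < conwayNum M i := by
  unfold conwayNum
  split <;> simp [Nat.pos_iff_ne_zero, (Nat.prime_nth_prime _).ne_zero, Move.incFactor_ne_zero]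

lemma conwayDen_pos (M : CM3 m) (i : ℕ) : 0 < conwayDen M i := by
  unfold conwayDen
  split <;> simp [Nat.pos_iff_ne_zero, (Nat.prime_nth_prime _).ne_zero, Move.decFactor_ne_zero]

lemma conwayDen_mul_enc_step (M : CM3 m) (hwf : M.WellFormed) (c : Fin m × ℕ × ℕ × ℕ) :
    conwayDen M (enc m c % primeProd m) * enc m (M.step c) =
      conwayNum M (enc m c % primeProd m) * enc m c := by
  obtain ⟨q, c₁, c₂, c₃⟩ := c
  have hinstr := M.instrAt_enc_mod (q, c₁, c₂, c₃)
  rcases hδ : M.δ (q, decide (c₁ = 0), decide (c₂ = 0)) with - | ⟨q', m₁, m₂⟩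
  · simp only [conwayDen, conwayNum, hinstr, hδ, Option.map_none, CM3.step]
  simp only [conwayDen, conwayNum, hinstr, hδ, Option.map_some]
  simp only [CM3.step, hδ, enc]
  have hw := hwf q _ _ q' m₁ m₂ hδ
  have h₁ := m₁.decFactor_mul_pow_apply (n := c₁) (fun h h0 => hw.1 (by simp [h0]) h) (pr m)
  have h₂ := m₂.decFactor_mul_pow_apply (n := c₂) (fun h h0 => hw.2 (by simp [h0]) h)
    (pr (m + 1))
  calc pr q * m₁.decFactor (pr m) * m₂.decFactor (pr (m + 1)) *
        (pr q' * pr m ^ m₁.apply c₁ * pr (m + 1) ^ m₂.apply c₂ * pr (m + 2) ^ (c₃ + 1))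
      = pr q * pr q' * pr (m + 2) ^ (c₃ + 1) * (m₁.decFactor (pr m) * pr m ^ m₁.apply c₁) *
          (m₂.decFactor (pr (m + 1)) * pr (m + 1) ^ m₂.apply c₂) := by ring
    _ = pr q * pr q' * pr (m + 2) ^ (c₃ + 1) * (m₁.incFactor (pr m) * pr m ^ c₁) *
          (m₂.incFactor (pr (m + 1)) * pr (m + 1) ^ c₂) := by rw [h₁, h₂]
    _ = _ := by ring

end Fractions

section Runs

variable {m : ℕ} (hm : 0 < m) (M : CM3 m)

lemma CM3.step_of_isHalting {c : Fin m × ℕ × ℕ × ℕ} (h : M.IsHalting c) : M.step c = c := by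
  rw [CM3.IsHalting] at h
  simp only [CM3.step, h]

lemma CM3.step_third_of_not_isHalting {c : Fin m × ℕ × ℕ × ℕ} (h : ¬ M.IsHalting c) :
    (M.step c).2.2.2 = c.2.2.2 + 1 := by
  rw [CM3.IsHalting, ← ne_eq, Option.ne_none_iff_exists'] at h
  obtain ⟨⟨q', m₁, m₂⟩, hδ⟩ := h
  simp only [CM3.step, hδ]

lemma CM3.run_eq_of_le {n₀ n : ℕ} (h : M.IsHalting (M.run hm n₀)) (hn : n₀ ≤ n) :
    M.run hm n = M.run hm n₀ := by
  induction n, hn using Nat.le_induction with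
  | base => rfl
  | succ n _ ih => rw [CM3.run, ih, M.step_of_isHalting h]

lemma CM3.run_third_of_forall_not_isHalting (h : ∀ k, ¬ M.IsHalting (M.run hm k)) (n : ℕ) :
    (M.run hm n).2.2.2 = n := by
  induction n with
  | zero => rfl
  | succ n ih => rw [CM3.run, M.step_third_of_not_isHalting (h n), ih]

lemma CM3.exists_isHalting_run_iff_finite :
    (∃ n, M.IsHalting (M.run hm n)) ↔ {x : ℕ | ∃ n, x = enc m (M.run hm n)}.Finite := by
  constructor
  · rintro ⟨n₀, h⟩
    refine ((Set.finite_Iic n₀).image fun k => enc m (M.run hm k)).subset ?_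
    rintro x ⟨n, rfl⟩
    refine ⟨min n n₀, Set.mem_Iic.2 (min_le_right _ _), ?_⟩
    rcases le_total n n₀ with hn | hn
    · rw [min_eq_left hn]
    · rw [min_eq_right hn, M.run_eq_of_le hm h hn]
  · contrapose!
    intro h
    refine Set.infinite_of_not_bddAbove fun ⟨b, hb⟩ => ?_
    have hlt := lt_enc (M.run hm b)
    rw [M.run_third_of_forall_not_isHalting hm h] at hlt
    exact (hb ⟨b, rfl⟩).not_gt hlt

end Runs

lemma GSet_iff_exists_run {m : ℕ} (hm : 0 < m) (M : CM3 m) {Q R : Fin (primeProd m) → ℕ}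
    (hR : ∀ i, 0 < R i)
    (hQR : ∀ c, R (encMod m (enc m c)) * enc m (M.step c) = Q (encMod m (enc m c)) * enc m c)
    (x : ℕ) : GSet m Q R x ↔ ∃ n, x = enc m (M.run hm n) := by
  constructor
  · intro hx
    induction hx with
    | base => exact ⟨0, (enc_run_zero hm M).symm⟩
    | step _ hz ih =>
      obtain ⟨k, rfl⟩ := ih
      exact ⟨k + 1, Nat.eq_of_mul_eq_mul_left (hR _) (hz.trans (hQR _).symm)⟩
  · rintro ⟨n, rfl⟩
    induction n with
    | zero => exact enc_run_zero hm M ▸ GSet.base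
    | succ k ih => exact GSet.step ih (hQR _)

/-- For every well-formed deterministic three-counter machine `M` with `m ≥ 1` states
there exist `Q R : Fin p → ℕ` (for `p` the product of the first `m + 3` primes), with all
values `≥ 1`, satisfying the Conway property `R (e(c) mod p) · e(step c) = Q (e(c) mod p) · e(c)`
for every configuration `c`, such that the least set `𝒢` containing `2` and closed under the
induced rule equals the set of encodings of the configurations of the run; in particular `M`
halts if and only if `𝒢` is finite. -/
theorem conway_set_eq_run_encodings (m : ℕ) (hm : 0 < m) (M : CM3 m)
    (hwf : M.WellFormed) :
    ∃ Q R : Fin (primeProd m) → ℕ,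
      (∀ i, 1 ≤ Q i) ∧ (∀ i, 1 ≤ R i) ∧
      (∀ c : Fin m × ℕ × ℕ × ℕ,
        R (encMod m (enc m c)) * enc m (M.step c) =
          Q (encMod m (enc m c)) * enc m c) ∧
      {x : ℕ | GSet m Q R x} = {x : ℕ | ∃ n, x = enc m (M.run hm n)} ∧
      ((∃ n, M.IsHalting (M.run hm n)) ↔ {x : ℕ | GSet m Q R x}.Finite) := by
  have hQR := conwayDen_mul_enc_step M hwf
  have hset : {x : ℕ | GSet m (fun i => conwayNum M i) (fun i => conwayDen M i) x} =
      {x : ℕ | ∃ n, x = enc m (M.run hm n)} :=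
    Set.ext (GSet_iff_exists_run hm M (fun i => conwayDen_pos M i) hQR)
  refine ⟨fun i => conwayNum M i, fun i => conwayDen M i, fun i => conwayNum_pos M i,
    fun i => conwayDen_pos M i, hQR, hset, ?_⟩
  rw [hset]
  exact M.exists_isHalting_run_iff_finite hm
end

section
/- With the path-of-length-N relations T, C, K as defined (parameters N, m ∈ ℕ): for every j ≥ 1, K j holds if and only if (j − 1) · 2^m ≤ N · (2^m − 1) (i.e. (j − 1)/N ≤ (2^m − 1)/2^m). -/
/-- The relation `T` on the path `a₀, …, a_N`: `T j j` for `1 ≤ j ≤ N`, and if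
`T i j` with `i ≥ 2` and `j ≥ 1` then `T (i - 2) (j - 1)`. -/
inductive Tpath (N : ℕ) : ℕ → ℕ → Prop
  | diag {j : ℕ} : 1 ≤ j → j ≤ N → Tpath N j j
  | step {i j : ℕ} : Tpath N i j → 2 ≤ i → 1 ≤ j → Tpath N (i - 2) (j - 1)

/-- The relation `C` (first argument: level, second: position): `C l 0` for every
`l ≤ m`, and if `T i j`, `C l i` and `l < m`, then `C (l + 1) j`. -/
inductive Cpath (N m : ℕ) : ℕ → ℕ → Prop
  | base {l : ℕ} : l ≤ m → Cpath N m l 0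
  | step {i j l : ℕ} : Tpath N i j → Cpath N m l i → l < m → Cpath N m (l + 1) j

/-- The predicate `K`: `K 0`, and if `C m j` then `K (j + 1)`. -/
inductive Kpath (N m : ℕ) : ℕ → Prop
  | zero : Kpath N m 0
  | step {j : ℕ} : Cpath N m m j → Kpath N m (j + 1)

/-!
`T i j` holds exactly when `1 ≤ j`, `i ≤ j` and `2 j ≤ N + i`: such a pair is reached from the
diagonal pair `(2j - i, 2j - i)` by `j - i` steps. So one `C`-step moves from position `i` to any
position `j ≤ (N + i) / 2`, and starting from position `0` the positions reachable at level `l`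
are those with `j ≤ N (1 - 2⁻ˡ)`, i.e. `j · 2ˡ + N ≤ N · 2ˡ`.
-/

section

variable {N m : ℕ}

theorem Tpath.bounds {i j : ℕ} (h : Tpath N i j) : 1 ≤ j ∧ i ≤ j ∧ 2 * j ≤ N + i := by
  induction h <;> omega

theorem Tpath.descend {i j : ℕ} (h : Tpath N i j) {k : ℕ} (hk : 2 * k ≤ i) :
    Tpath N (i - 2 * k) (j - k) := by
  induction k with
  | zero => simpa using h
  | succ k ih =>
    have h' := ih (by omega)
    convert h'.step (by omega) h'.bounds.1 using 1 <;> omega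

theorem tpath_iff {i j : ℕ} : Tpath N i j ↔ 1 ≤ j ∧ i ≤ j ∧ 2 * j ≤ N + i := by
  refine ⟨Tpath.bounds, fun ⟨hj, hij, hjN⟩ => ?_⟩
  have h := (Tpath.diag (N := N) (j := 2 * j - i) (by omega) (by omega)).descend
    (k := j - i) (by omega)
  convert h using 1 <;> omega

theorem Cpath.bound {l j : ℕ} (h : Cpath N m l j) : l ≤ m ∧ j * 2 ^ l + N ≤ N * 2 ^ l := by
  induction h with
  | base hl => exact ⟨hl, by simpa using Nat.le_mul_of_pos_right N (Nat.two_pow_pos _)⟩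
  | @step i j l hT _ hl ih =>
    have hstep := Nat.mul_le_mul_right (2 ^ l) (tpath_iff.1 hT).2.2
    refine ⟨hl, ?_⟩
    rw [pow_succ]
    nlinarith [ih.2]

theorem Cpath.of_bound {l j : ℕ} (hl : l ≤ m) (hj : j * 2 ^ l + N ≤ N * 2 ^ l) :
    Cpath N m l j := by
  induction l generalizing j with
  | zero =>
    obtain rfl : j = 0 := by simpa using hj
    exact .base hl
  | succ l ih =>
    rcases Nat.eq_zero_or_pos j with rfl | hj0
    · exact .base hl
    have hq := Nat.two_pow_pos l
    rw [pow_succ] at hj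
    have hjN : j ≤ N := Nat.le_of_mul_le_mul_right (by omega) (Nat.mul_pos hq two_pos)
    -- `2 j - N` is the smallest position `i` with `T i j`
    have hpred : (2 * j - N) * 2 ^ l + N ≤ N * 2 ^ l := by
      rcases le_total (2 * j) N with h2j | h2j
      · simpa [Nat.sub_eq_zero_of_le h2j] using Nat.le_mul_of_pos_right N hq
      · have e := congrArg (· * 2 ^ l) (Nat.add_sub_of_le h2j)
        simp only [add_mul] at e
        nlinarith
    exact .step (tpath_iff.2 ⟨hj0, by omega, by omega⟩) (ih (by omega) hpred) (by omega)

theorem cpath_iff {l j : ℕ} : Cpath N m l j ↔ l ≤ m ∧ j * 2 ^ l + N ≤ N * 2 ^ l :=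
  ⟨Cpath.bound, fun ⟨hl, hj⟩ => .of_bound hl hj⟩

theorem kpath_succ_iff {j : ℕ} : Kpath N m (j + 1) ↔ Cpath N m m j :=
  ⟨fun h => by cases h; assumption, Kpath.step⟩

end

theorem Kpath_iff_general (N m : ℕ) (j : ℕ) :
    Kpath N m j ↔ (j - 1) * 2 ^ m ≤ N * (2 ^ m - 1) := by
  rcases j with _ | j
  · exact iff_of_true .zero (by simp)
  · have hN := Nat.le_mul_of_pos_right N (Nat.two_pow_pos m)
    rw [kpath_succ_iff, cpath_iff, Nat.add_sub_cancel, Nat.mul_sub_one]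
    omega

/-- For `j ≥ 1`: `K j` holds if and only if `(j − 1) · 2^m ≤ N · (2^m − 1)`. -/
theorem Kpath_iff (N m : ℕ) (j : ℕ) (hj : 1 ≤ j) :
    Kpath N m j ↔ (j - 1) * 2 ^ m ≤ N * (2 ^ m - 1) :=
  Kpath_iff_general N m j
end
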